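/- arXiv:2102.08788 — 5 statements merged into one kernel-verified Lean document; each statement's English description precedes it below -/
import Mathlib

section
/- In the ring Z_L, given shares x₀,x₁,y₀,y₁,b₀,b₁ and random values r₀,r₁,r₂,r₃, let M₁ = x₀ - b₀(x₀-y₀) + r₁b₀ + r₂(x₀-y₀) + r₂r₃, M₄ = x₁ - b₁(x₁-y₁) + r₀(x₁-y₁) + r₀r₁ + r₃b₁, and w = (b₀+r₀)((x₁-y₁)+r₁) + ((x₀-y₀)+r₃)(b₁+r₂). If w is split as w = w₀ + w₁, then (M₁ - w₀) + (M₄ - w₁) = (1-b)·x + b·y, where x = x₀+x₁, y = y₀+y₁, b = b₀+b₁. -/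
/-- Correctness of the select-share (MUX) protocol over `Z_L` with `L = 2^ℓ`. -/
theorem mux_correct (ℓ : ℕ) (x₀ x₁ y₀ y₁ b₀ b₁ r₀ r₁ r₂ r₃ w₀ w₁ M₁ M₄ : ZMod (2 ^ ℓ))
    (hM₁ : M₁ = x₀ - b₀ * (x₀ - y₀) + r₁ * b₀ + r₂ * (x₀ - y₀) + r₂ * r₃)
    (hM₄ : M₄ = x₁ - b₁ * (x₁ - y₁) + r₀ * (x₁ - y₁) + r₀ * r₁ + r₃ * b₁)
    (hw : w₀ + w₁ = (b₀ + r₀) * ((x₁ - y₁) + r₁) + ((x₀ - y₀) + r₃) * (b₁ + r₂)) :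
    (M₁ - w₀) + (M₄ - w₁)
      = (1 - (b₀ + b₁)) * (x₀ + x₁) + (b₀ + b₁) * (y₀ + y₁) := by subst hM₁ hM₄; have h : w₀ = _ - w₁ := eq_sub_of_add_eq hw; subst h; ring
end

section
/- Let K be a positive integer, and x, r natural numbers with 0 ≤ x, r < K. Let y = (x + r) mod K and let c = 1 if r > y and c = 0 otherwise. Then x + r = y + c·K; equivalently, viewing y and r as elements of Z_{2K}, we have x ≡ y + c·K - r (mod 2K) whenever x < K. -/
/-- Correctness of the modulus-conversion trick: for `x, r < K`, `y = (x + r) % K` and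
wrap bit `c = [r > y]`, we have `x + r = y + c * K`; equivalently, in `Z_{2K}`,
`x ≡ y + c * K - r`. -/
theorem mask_unwrap (K : ℕ) (hK : 0 < K) (x r : ℕ) (hx : x < K) (hr : r < K)
    (y : ℕ) (hy : y = (x + r) % K) (c : ℕ) (hc : c = if y < r then 1 else 0) :
    x + r = y + c * K ∧
      (x : ZMod (2 * K)) = (y : ZMod (2 * K)) + (c : ZMod (2 * K)) * (K : ZMod (2 * K))
        - (r : ZMod (2 * K)) := by
  have h1 : x + r = y + c * K := by
    rcases lt_or_ge (x + r) K with h | h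
    · have hy' : y = x + r := by rw [hy, Nat.mod_eq_of_lt h]
      have : ¬ y < r := by omega
      simp [hc, this, hy']
    · have hy' : y = x + r - K := by
        rw [hy, Nat.mod_eq_sub_mod h, Nat.mod_eq_of_lt (by omega)]
      have : y < r := by omega
      simp [hc, this]; omega
  refine ⟨h1, ?_⟩
  have := congrArg (Nat.cast : ℕ → ZMod (2 * K)) h1
  push_cast at this
  linear_combination this
end

section
/- Under the with-ties trapezoidal formula, the AUROC equals (number of pairs (positive, negative) with the positive scored strictly higher) plus one half times (number of tied positive-negative pairs), all divided by P·N. Formally: let M ≥ 1, scores s : Fin M → ℚ, labels y : Fin M → {0,1}, P = #{i : y(i)=1} > 0, N = #{i : y(i)=0} > 0. Then ∑ over distinct thresholds of [T_prev·ΔF + ΔT·ΔF/2] divided by P·N equals (#{(i,j) : y(i)=1, y(j)=0, s(i) > s(j)} + (1/2)·#{(i,j) : y(i)=1, y(j)=0, s(i) = s(j)}) / (P·N), where T and F are the cumulative counts of positives and negatives evaluated at each distinct score threshold (sorted descending), T_prev and F_prev are the values at the previous threshold, ΔT = T - T_prev and ΔF = F - F_prev. -/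
/-!
Group the trapezoid of the `k`-th distinct threshold `v` by the negatives scored exactly `v`:
its rectangle `T_prev · ΔF` is (#positives above `v`) · (#negatives at `v`) and its triangle
`ΔT · ΔF / 2` is half of (#positives at `v`) · (#negatives at `v`). Summed over all `v`, these
count the positive–negative pairs ordered correctly, plus half of the tied ones.
-/

open Finset

section Counting

variable {ι α : Type*} [Fintype ι]

theorem card_filter_le_eq_card_filter_lt_add [LinearOrder α] (p : ι → Prop) [DecidablePred p]
    (s : ι → α) (v : α) :
    #{i | p i ∧ v ≤ s i} = #{i | p i ∧ v < s i} + #{i | p i ∧ s i = v} := by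
  classical
  rw [← card_union_of_disjoint (disjoint_filter.2 fun i _ h h' => h.2.ne' h'.2)]
  congr 1
  ext i
  simp only [mem_filter, mem_univ, true_and, mem_union, le_iff_lt_or_eq, eq_comm (a := v),
    and_or_left]

theorem card_filter_prod_eq_sum_image [DecidableEq α] (p q : ι → Prop) [DecidablePred p]
    [DecidablePred q] (R : α → α → Prop) [DecidableRel R] (s : ι → α) :
    #{x : ι × ι | p x.1 ∧ q x.2 ∧ R (s x.1) (s x.2)}
      = ∑ v ∈ univ.image s, #{i | p i ∧ R (s i) v} * #{j | q j ∧ s j = v} := by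
  rw [card_eq_sum_card_fiberwise (f := fun x => s x.2) (t := univ.image s)
    fun x _ => mem_image_of_mem s (mem_univ _)]
  refine sum_congr rfl fun v _ => ?_
  rw [← card_product]
  congr 1
  ext ⟨i, j⟩
  simp only [mem_filter, mem_univ, true_and, mem_product]
  constructor
  · rintro ⟨⟨hp, hq, hR⟩, rfl⟩
    exact ⟨⟨hp, hR⟩, hq, rfl⟩
  · rintro ⟨⟨hp, hR⟩, hq, rfl⟩
    exact ⟨⟨hp, hq, hR⟩, rfl⟩

end Counting

theorem List.sum_range_length_getD {α M : Type*} [DecidableEq α] [AddCommMonoid M]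
    {l : List α} (hl : l.Nodup) (g : α → M) (d : α) :
    ∑ k ∈ Finset.range l.length, g (l.getD k d) = ∑ v ∈ l.toFinset, g v := by
  rw [sum_range, sum_toFinset g hl, ← Fin.sum_univ_fun_getElem]
  simp only [List.getD_eq_getElem, Fin.is_lt]

theorem List.SortedGT.getD_lt_iff {α : Type*} [LinearOrder α] {l : List α} (hl : l.SortedGT)
    {x : α} (hx : x ∈ l) {k : ℕ} (hk : k < l.length) (d : α) :
    l.getD k d < x ↔ k ≠ 0 ∧ l.getD (k - 1) d ≤ x := by
  obtain ⟨j, hj, rfl⟩ := List.getElem_of_mem hx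
  rw [List.getD_eq_getElem _ _ hk, hl.getElem_lt_getElem_iff]
  rcases k with _ | k
  · simp
  · rw [List.getD_eq_getElem _ _ (by omega), hl.getElem_le_getElem_iff]
    omega

theorem List.SortedGT.card_filter_getD_lt {ι α : Type*} [Fintype ι] [LinearOrder α]
    {l : List α} (hl : l.SortedGT) (p : ι → Prop) [DecidablePred p] {s : ι → α}
    (hs : ∀ i, s i ∈ l) {k : ℕ} (hk : k < l.length) (d : α) :
    #{i | p i ∧ l.getD k d < s i}
      = if k = 0 then 0 else #{i | p i ∧ l.getD (k - 1) d ≤ s i} := by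
  simp_rw [hl.getD_lt_iff (hs _) hk]
  split_ifs with h <;> simp [h]

theorem auroc_with_ties_wmw_general (M : ℕ) (s : Fin M → ℚ) (y : Fin M → ℕ)
    (P N : ℕ)
    (l : List ℚ) (hl : l = ((univ.image s).sort (· ≤ ·)).reverse)
    (Tat Fat : ℚ → ℕ)
    (hTat : ∀ v, Tat v = (univ.filter (fun i => y i = 1 ∧ v ≤ s i)).card)
    (hFat : ∀ v, Fat v = (univ.filter (fun i => y i = 0 ∧ v ≤ s i)).card)
    (Tprev Fprev : ℕ → ℕ)
    (hTprev : ∀ k, Tprev k = if k = 0 then 0 else Tat (l.getD (k - 1) 0))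
    (hFprev : ∀ k, Fprev k = if k = 0 then 0 else Fat (l.getD (k - 1) 0)) :
    (∑ k ∈ range l.length,
        ((Tprev k : ℚ) * ((Fat (l.getD k 0) : ℚ) - (Fprev k : ℚ))
          + ((Tat (l.getD k 0) : ℚ) - (Tprev k : ℚ))
              * ((Fat (l.getD k 0) : ℚ) - (Fprev k : ℚ)) / 2)) / (P * N)
      = (((univ.filter
              (fun p : Fin M × Fin M => y p.1 = 1 ∧ y p.2 = 0 ∧ s p.1 > s p.2)).card : ℚ)
          + (1 / 2)
            * ((univ.filter
                (fun p : Fin M × Fin M => y p.1 = 1 ∧ y p.2 = 0 ∧ s p.1 = s p.2)).card : ℚ))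
        / (P * N) := by
  have hsorted : l.SortedGT := hl ▸ (sortedLT_sort _).reverse
  have hmem : ∀ i, s i ∈ l := by simp [hl]
  have htoFinset : l.toFinset = univ.image s := by simp [hl, sort_toFinset]
  have hprev : ∀ k < l.length, Tprev k = #{i | y i = 1 ∧ l.getD k 0 < s i}
      ∧ Fprev k = #{i | y i = 0 ∧ l.getD k 0 < s i} := fun k hk => by
    constructor <;> simp only [hTprev, hFprev, hTat, hFat, hsorted.card_filter_getD_lt _ hmem hk]
  set g : ℚ → ℚ := fun v => #{i | y i = 1 ∧ v < s i} * #{j | y j = 0 ∧ s j = v}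
    + #{i | y i = 1 ∧ s i = v} * #{j | y j = 0 ∧ s j = v} / 2 with hg
  have hterm : ∀ k ∈ range l.length,
      (Tprev k : ℚ) * (Fat (l.getD k 0) - Fprev k)
          + (Tat (l.getD k 0) - Tprev k) * (Fat (l.getD k 0) - Fprev k) / 2
        = g (l.getD k 0) := fun k hk => by
    obtain ⟨hT, hF⟩ := hprev k (mem_range.1 hk)
    rw [hT, hF, hTat, hFat, card_filter_le_eq_card_filter_lt_add,
      card_filter_le_eq_card_filter_lt_add]
    push_cast
    ring
  rw [sum_congr rfl hterm, List.sum_range_length_getD hsorted.nodup g, htoFinset,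
    card_filter_prod_eq_sum_image (y · = 1) (y · = 0) (· > ·),
    card_filter_prod_eq_sum_image (y · = 1) (y · = 0) (· = ·), hg, sum_add_distrib, ← sum_div]
  push_cast
  ring

/-- AUROC with ties (trapezoidal form) equals the Wilcoxon–Mann–Whitney statistic with
tied positive-negative pairs counted one half: summing, over the distinct score
thresholds sorted descending, the rectangle areas `T_prev·ΔF` plus triangle areas
`ΔT·ΔF/2`, and dividing by `P·N`, gives
`(#{strictly concordant pairs} + (1/2)·#{tied pairs}) / (P·N)`. -/
theorem auroc_with_ties_wmw (M : ℕ) (hM : 1 ≤ M) (s : Fin M → ℚ) (y : Fin M → ℕ)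
    (hy : ∀ i, y i = 0 ∨ y i = 1)
    (P N : ℕ) (hP : P = (univ.filter (fun i => y i = 1)).card)
    (hN : N = (univ.filter (fun i => y i = 0)).card)
    (hPpos : 0 < P) (hNpos : 0 < N)
    (l : List ℚ) (hl : l = ((univ.image s).sort (· ≤ ·)).reverse)
    (Tat Fat : ℚ → ℕ)
    (hTat : ∀ v, Tat v = (univ.filter (fun i => y i = 1 ∧ v ≤ s i)).card)
    (hFat : ∀ v, Fat v = (univ.filter (fun i => y i = 0 ∧ v ≤ s i)).card)
    (Tprev Fprev : ℕ → ℕ)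
    (hTprev : ∀ k, Tprev k = if k = 0 then 0 else Tat (l.getD (k - 1) 0))
    (hFprev : ∀ k, Fprev k = if k = 0 then 0 else Fat (l.getD (k - 1) 0)) :
    (∑ k ∈ range l.length,
        ((Tprev k : ℚ) * ((Fat (l.getD k 0) : ℚ) - (Fprev k : ℚ))
          + ((Tat (l.getD k 0) : ℚ) - (Tprev k : ℚ))
              * ((Fat (l.getD k 0) : ℚ) - (Fprev k : ℚ)) / 2)) / (P * N)
      = (((univ.filter
              (fun p : Fin M × Fin M => y p.1 = 1 ∧ y p.2 = 0 ∧ s p.1 > s p.2)).card : ℚ)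
          + (1 / 2)
            * ((univ.filter
                (fun p : Fin M × Fin M => y p.1 = 1 ∧ y p.2 = 0 ∧ s p.1 = s p.2)).card : ℚ))
        / (P * N) :=
  auroc_with_ties_wmw_general M s y P N l hl Tat Fat hTat hFat Tprev Fprev hTprev hFprev
end

section
/- Let L₁ and L₂ be lists over a linearly ordered type, each sorted in descending order, with |L₁| ≥ 1 and |L₂| ≥ 1. Define the shuffle operation that replaces, for each index i < min(|L₁|,|L₂|), the pair (L₁[i], L₂[i]) by (max(L₁[i],L₂[i]), min(L₁[i],L₂[i])). Then after shuffling, the head of L₁ is the maximum element of L₁ ++ L₂. -/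
variable {α : Type*} [LinearOrder α]

/-- The first list after the elementwise compare-and-swap shuffle: position `i` holds
`max (L₁[i]) (L₂[i])` for `i < min |L₁| |L₂|`, remaining positions of `L₁` unchanged. -/
def shuffleFst (L₁ L₂ : List α) : List α :=
  List.zipWith max L₁ L₂ ++ L₁.drop L₂.length

/-- The second list after the shuffle: position `i` holds `min (L₁[i]) (L₂[i])`. -/
def shuffleSnd (L₁ L₂ : List α) : List α :=
  List.zipWith min L₁ L₂ ++ L₂.drop L₁.length

theorem shuffleFst_cons_cons (a b : α) (t₁ t₂ : List α) :
    shuffleFst (a :: t₁) (b :: t₂) = max a b :: shuffleFst t₁ t₂ := by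
  simp [shuffleFst]

theorem head_shuffleFst {L₁ L₂ : List α} (h₁ : L₁ ≠ []) (h₂ : L₂ ≠ [])
    (hne : shuffleFst L₁ L₂ ≠ []) :
    (shuffleFst L₁ L₂).head hne = max (L₁.head h₁) (L₂.head h₂) := by
  obtain ⟨a, t₁, rfl⟩ := List.exists_cons_of_ne_nil h₁
  obtain ⟨b, t₂, rfl⟩ := List.exists_cons_of_ne_nil h₂
  simp only [shuffleFst_cons_cons, List.head_cons]

/-- After shuffling two nonempty descending-sorted lists, the head of the first list is
the maximum element of `L₁ ++ L₂`. -/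
theorem shuffle_head_is_max (L₁ L₂ : List α)
    (h₁ : L₁ ≠ []) (h₂ : L₂ ≠ [])
    (hs₁ : L₁.Pairwise (· ≥ ·)) (hs₂ : L₂.Pairwise (· ≥ ·))
    (hne : shuffleFst L₁ L₂ ≠ []) :
    (shuffleFst L₁ L₂).head hne ∈ L₁ ++ L₂ ∧
      ∀ x ∈ L₁ ++ L₂, x ≤ (shuffleFst L₁ L₂).head hne := by
  rw [head_shuffleFst h₁ h₂]
  refine ⟨?_, fun x hx => ?_⟩
  · rcases max_choice (L₁.head h₁) (L₂.head h₂) with h | h <;> rw [h]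
    · exact List.mem_append_left L₂ (List.head_mem h₁)
    · exact List.mem_append_right L₁ (List.head_mem h₂)
  · rcases List.mem_append.mp hx with hx | hx
    · exact (hs₁.rel_head hx).trans (le_max_left _ _)
    · exact (hs₂.rel_head hx).trans (le_max_right _ _)
end

section
/- After the elementwise compare-and-swap shuffle of two descending-sorted lists L₁, L₂ with |L₁| ≥ |L₂|, both resulting lists are still sorted in descending order. -/
/-!
`max` and `min` are monotone in both arguments, so comparing two sorted lists entrywise gives
sorted lists. The untouched tail of `L₁` fits below the compared prefix because the entry
`max L₁[i] L₂[i]` dominates `L₁[i]`, which dominates every later entry of `L₁`; the second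
list has no tail at all since `|L₂| ≤ |L₁|`.
-/

variable {α : Type*} [LinearOrder α]

namespace List

variable {β γ δ : Type*}

theorem exists_mem_take_of_mem_zipWith {f : β → γ → δ} {x : δ} :
    ∀ {l₁ : List β} {l₂ : List γ}, x ∈ zipWith f l₁ l₂ →
      ∃ a ∈ l₁.take l₂.length, ∃ b ∈ l₂, x = f a b
  | a :: l₁, b :: l₂, hx => by
    rcases mem_cons.1 hx with rfl | hx
    · exact ⟨a, mem_cons_self, b, mem_cons_self, rfl⟩
    · obtain ⟨a', ha', b', hb', rfl⟩ := exists_mem_take_of_mem_zipWith hx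
      exact ⟨a', mem_cons_of_mem a ha', b', mem_cons_of_mem b hb', rfl⟩

theorem Pairwise.zipWith {R : β → β → Prop} {S : γ → γ → Prop} {T : δ → δ → Prop}
    {f : β → γ → δ} {l₁ : List β} {l₂ : List γ} (h₁ : l₁.Pairwise R) (h₂ : l₂.Pairwise S)
    (hf : ∀ a a' b b', R a a' → S b b' → T (f a b) (f a' b')) :
    (zipWith f l₁ l₂).Pairwise T := by
  induction h₁ generalizing l₂ with
  | nil => simp
  | @cons a l₁ ha _ ih =>
    cases h₂ with
    | nil => simp
    | @cons b l₂ hb h₂ =>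
      refine pairwise_cons.2 ⟨fun x hx => ?_, ih h₂⟩
      obtain ⟨a', ha', b', hb', rfl⟩ := exists_mem_take_of_mem_zipWith hx
      exact hf _ _ _ _ (ha a' (mem_of_mem_take ha')) (hb b' hb')

end List

theorem pairwise_ge_shuffleFst {L₁ L₂ : List α} (hs₁ : L₁.Pairwise (· ≥ ·))
    (hs₂ : L₂.Pairwise (· ≥ ·)) : (shuffleFst L₁ L₂).Pairwise (· ≥ ·) := by
  refine List.pairwise_append.2
    ⟨hs₁.zipWith hs₂ fun _ _ _ _ => max_le_max, hs₁.drop, fun x hx y hy => ?_⟩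
  obtain ⟨a, ha, b, -, rfl⟩ := List.exists_mem_take_of_mem_zipWith hx
  exact (hs₁.rel_of_mem_take_of_mem_drop ha hy).trans (le_max_left a b)

theorem pairwise_ge_shuffleSnd {L₁ L₂ : List α} (hlen : L₂.length ≤ L₁.length)
    (hs₁ : L₁.Pairwise (· ≥ ·)) (hs₂ : L₂.Pairwise (· ≥ ·)) :
    (shuffleSnd L₁ L₂).Pairwise (· ≥ ·) := by
  rw [shuffleSnd, List.drop_eq_nil_of_le hlen, List.append_nil]
  exact hs₁.zipWith hs₂ fun _ _ _ _ => min_le_min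

/-- The shuffle of two descending-sorted lists with `|L₁| ≥ |L₂|` yields two
descending-sorted lists. -/
theorem shuffle_preserves_sorted (L₁ L₂ : List α)
    (hlen : L₂.length ≤ L₁.length)
    (hs₁ : L₁.Pairwise (· ≥ ·)) (hs₂ : L₂.Pairwise (· ≥ ·)) :
    (shuffleFst L₁ L₂).Pairwise (· ≥ ·) ∧ (shuffleSnd L₁ L₂).Pairwise (· ≥ ·) :=
  ⟨pairwise_ge_shuffleFst hs₁ hs₂, pairwise_ge_shuffleSnd hlen hs₁ hs₂⟩
end
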